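/- arXiv:1512.02792 — 3 statements merged into one kernel-verified Lean document; each statement's English description precedes it below -/
import Mathlib

section
/- Let δ be an ordinal of uncountable cofinality, let S' ⊆ δ be a stationary subset of δ consisting of limit ordinals of cofinality ω, and for each α ∈ S' let s_α : ℕ → α be a strictly increasing function with sup_{n<ω} s_α(n) = α. Then there exists a natural number n such that for every club E ⊆ δ, the set {s_α(n) : α ∈ S' ∩ E} is unbounded in δ. -/
/-!
Suppose every `n` fails, witnessed by a club `Eₙ` and a bound `βₙ < δ` with `s α n < βₙ` for all
`α ∈ S' ∩ Eₙ`. Since `cof δ > ω`, the set `(sup βₙ, δ) ∩ ⋂ₙ Eₙ` is again a club, so it meets `S'`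
in some `α`. Then `α = sup s α n ≤ sup βₙ < α`.
-/

/-- `C` is a club in the ordinal `δ`: a subset of `δ` that is unbounded in `δ` and
closed (the supremum of any nonempty subset, if below `δ`, belongs to `C`). -/
def IsClubIn (C : Set Ordinal) (δ : Ordinal) : Prop :=
  (∀ α ∈ C, α < δ) ∧ (∀ β < δ, ∃ α ∈ C, β ≤ α) ∧
    ∀ x ⊆ C, x.Nonempty → sSup x < δ → sSup x ∈ C

/-- `T` is stationary in the ordinal `δ`: a subset of `δ` meeting every club in `δ`. -/
def IsStationaryIn (T : Set Ordinal) (δ : Ordinal) : Prop :=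
  (∀ α ∈ T, α < δ) ∧ ∀ C, IsClubIn C δ → (T ∩ C).Nonempty

open Cardinal Ordinal Set

theorem Ordinal.iSup_lt_of_countable {ι : Type*} [Countable ι] {δ : Ordinal}
    (hδ : ℵ₀ < δ.cof) {f : ι → Ordinal} (hf : ∀ i, f i < δ) : ⨆ i, f i < δ :=
  lift_iSup_lt_of_lt_cof
    ((lift_le_aleph0.2 mk_le_aleph0).trans_lt (by rwa [← lift_cof, aleph0_lt_lift])) hf

theorem Ordinal.iSup_eq_iSup_of_interleave {a g : ℕ → Ordinal}
    (hga : ∀ k, g k ≤ a k) (hag : ∀ k, a k ≤ g (k + 1)) : ⨆ k, a k = ⨆ k, g k :=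
  le_antisymm (Ordinal.iSup_le fun k => (hag k).trans (Ordinal.le_iSup g (k + 1)))
    (Ordinal.iSup_le fun k => (hga k).trans (Ordinal.le_iSup a k))

theorem isClubIn_Ioo {β δ : Ordinal} (hδ : Order.IsSuccLimit δ) (hβ : β < δ) :
    IsClubIn (Ioo β δ) δ := by
  refine ⟨fun α hα => hα.2, fun γ hγ => ?_, fun x hx ⟨y, hy⟩ hlt => ?_⟩
  · exact ⟨max (Order.succ β) γ,
      ⟨(Order.lt_succ β).trans_le (le_max_left _ _), max_lt (hδ.succ_lt hβ) hγ⟩, le_max_right _ _⟩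
  · exact ⟨(hx hy).1.trans_le (le_csSup ⟨δ, fun z hz => (hx hz).2.le⟩ hy), hlt⟩

namespace IsClubIn

variable {ι : Type*} {δ : Ordinal}

theorem iSup_mem [Nonempty ι] {C : Set Ordinal} (hC : IsClubIn C δ) {f : ι → Ordinal}
    (hf : ∀ i, f i ∈ C) (hlt : ⨆ i, f i < δ) : ⨆ i, f i ∈ C :=
  hC.2.2 _ (range_subset_iff.2 hf) (range_nonempty f) hlt

theorem exists_ge_mem_iInter [Countable ι] (hδ : ℵ₀ < δ.cof) {F : ι → Set Ordinal}
    (hF : ∀ i, IsClubIn (F i) δ) {β : Ordinal} (hβ : β < δ) : ∃ α ∈ ⋂ i, F i, β ≤ α := by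
  choose e he using fun i (γ : Iio δ) => (hF i).2.1 γ γ.2
  let next : Iio δ → Iio δ := fun γ =>
    ⟨⨆ i, e i γ, Ordinal.iSup_lt_of_countable hδ fun i => (hF i).1 _ (he i γ).1⟩
  -- Each step of `g` passes a point of every `F i`, so `sup g` is a limit of points of `F i`.
  let g : ℕ → Iio δ := fun k => next^[k] ⟨β, hβ⟩
  have hg_lt : ⨆ k, (g k : Ordinal) < δ := Ordinal.iSup_lt_of_countable hδ fun k => (g k).2
  refine ⟨⨆ k, (g k : Ordinal), mem_iInter.2 fun i => ?_,
    Ordinal.le_iSup (fun k => (g k : Ordinal)) 0⟩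
  have hsup : ⨆ k, e i (g k) = ⨆ k, (g k : Ordinal) :=
    iSup_eq_iSup_of_interleave (fun k => (he i (g k)).2) fun k => by
      simp only [g, Function.iterate_succ_apply']
      exact Ordinal.le_iSup (fun j => e j (g k)) i
  rw [← hsup] at hg_lt ⊢
  exact (hF i).iSup_mem (fun k => (he i (g k)).1) hg_lt

theorem iInter [Countable ι] [Nonempty ι] (hδ : ℵ₀ < δ.cof) {F : ι → Set Ordinal}
    (hF : ∀ i, IsClubIn (F i) δ) : IsClubIn (⋂ i, F i) δ :=
  ⟨fun α hα => (hF (Classical.arbitrary ι)).1 α (mem_iInter.1 hα _),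
    fun _ hβ => exists_ge_mem_iInter hδ hF hβ,
    fun x hx hne hlt => mem_iInter.2 fun i => (hF i).2.2 x (hx.trans (iInter_subset F i)) hne hlt⟩

theorem inter (hδ : ℵ₀ < δ.cof) {C D : Set Ordinal} (hC : IsClubIn C δ) (hD : IsClubIn D δ) :
    IsClubIn (C ∩ D) δ := by
  rw [inter_eq_iInter]
  exact iInter hδ (Bool.forall_bool.2 ⟨hD, hC⟩)

end IsClubIn

theorem exists_n_unbounded_general (δ : Ordinal)
    (hδ : Cardinal.aleph0 < δ.cof)
    (S' : Set Ordinal) (hS' : IsStationaryIn S' δ)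
    (s : Ordinal → ℕ → Ordinal)
    (hsup : ∀ α ∈ S', (⨆ n, s α n) = α) :
    ∃ n : ℕ, ∀ E, IsClubIn E δ → ∀ β < δ, ∃ α ∈ S' ∩ E, β ≤ s α n := by
  by_contra! h
  choose E hE β hβδ hβ using h
  have hβ_lt : ⨆ n, β n < δ := Ordinal.iSup_lt_of_countable hδ hβδ
  have hδ_limit : Order.IsSuccLimit δ := one_lt_cof_iff.1 (one_lt_aleph0.trans hδ)
  have hC : IsClubIn (Ioo (⨆ n, β n) δ ∩ ⋂ n, E n) δ :=
    (isClubIn_Ioo hδ_limit hβ_lt).inter hδ (IsClubIn.iInter hδ hE)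
  obtain ⟨α, hαS, ⟨hβα, -⟩, hαE⟩ := hS'.2 _ hC
  have hα_le : α ≤ ⨆ n, β n := hsup α hαS ▸ Ordinal.iSup_le fun n =>
    (hβ n α ⟨hαS, mem_iInter.1 hαE n⟩).le.trans (Ordinal.le_iSup β n)
  exact hα_le.not_gt hβα

/-- If `S'` is a stationary subset of `δ` (of uncountable cofinality) consisting of limit
ordinals of cofinality `ω`, with witnessing cofinal `ω`-sequences `s α`, then there is
`n < ω` such that `{s α n : α ∈ S' ∩ E}` is unbounded in `δ` for every club `E ⊆ δ`. -/
theorem exists_n_unbounded (δ : Ordinal)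
    (hδ : Cardinal.aleph0 < δ.cof)
    (S' : Set Ordinal) (hS' : IsStationaryIn S' δ)
    (hlim : ∀ α ∈ S', Order.IsSuccLimit α ∧ Ordinal.cof α = Cardinal.aleph0)
    (s : Ordinal → ℕ → Ordinal)
    (hmono : ∀ α ∈ S', StrictMono (s α))
    (hlt : ∀ α ∈ S', ∀ n, s α n < α)
    (hsup : ∀ α ∈ S', (⨆ n, s α n) = α) :
    ∃ n : ℕ, ∀ E, IsClubIn E δ → ∀ β < δ, ∃ α ∈ S' ∩ E, β ≤ s α n :=
  exists_n_unbounded_general δ hδ S' hS' s hsup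
end

section
/- Let ζ be an ordinal and let ⟨μ_i : i < ζ⟩ and ⟨ν_i : i < ζ⟩ be sequences of regular cardinals with ζ < μ_0 and μ_i ≤ ν_i < μ_j for all i < j < ζ. Let λ be a cardinal with λ ≥ sup_{i<ζ} ν_i. Then there exists a projection from the Easton collapse E(μ_0, λ) to the full-support product ∏_{i<ζ} E(μ_i, ν_i), where the product is ordered coordinatewise. -/
/-!
A condition `p ∈ E(μ 0, lam)` carries at each coordinate `γ` a partial function `μ 0 → γ`. For
`γ ∈ [μ i, ν i)` (these intervals are disjoint, so `γ` determines `i`) fix an enumeration of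
`Col(μ i, γ)` by the ordinals below `γ`, which exists because `γ^{<γ} = γ`. The projection reads
the values of `p γ` below the first gap of its domain, in order, as codes, and keeps the union of
those decoded conditions that extend everything kept before them. The kept conditions form a chain
of fewer than `μ i` conditions, so their union is in `Col(μ i, γ)`; extending `p γ` does not change
the reading below the old first gap, which gives monotonicity. Conversely, if `q i γ` extends the
reading of `p γ`, writing a code of `q i γ` into the first gap of `p γ` gives a stronger condition
whose reading contains `q i γ`; doing so at all coordinates keeps Easton support since `ζ < μ 0`.
-/

/-- A condition in the Levy collapse `Col(μ, γ)`: a partial function from `μ` to `γ`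
(coded as a functional set of pairs of ordinals, with domain contained in `μ` and
values in `γ`) whose domain has cardinality less than `μ`. The order is reverse
inclusion (`p ≤ q` iff `q ⊆ p`), with the empty function as greatest element. -/
def IsLevyCond (μ γ : Cardinal.{0}) (p : Set (Ordinal × Ordinal)) : Prop :=
  (∀ q ∈ p, q.1 < μ.ord ∧ q.2 < γ.ord) ∧
  (∀ a b b', (a, b) ∈ p → (a, b') ∈ p → b = b') ∧
  Cardinal.mk ↥(Prod.fst '' p) < Cardinal.lift.{1} μ

/-- A cardinal `γ` is strong regular if it is regular and `γ^{<γ} = γ`. -/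
def StrongRegular (γ : Cardinal.{0}) : Prop :=
  γ.IsRegular ∧ γ ^< γ = γ

/-- A condition in the Easton collapse `E(μ, ν)`: a function assigning to each strong
regular `γ ∈ [μ, ν)` a condition in `Col(μ, γ)` (and `∅` elsewhere) such that for every
regular `λ' ≤ ν`, fewer than `λ'` coordinates below `λ'` are nonempty. The order is
coordinatewise reverse inclusion, with the everywhere-`∅` function as greatest element. -/
def IsEastonCond (μ ν : Cardinal.{0}) (p : Cardinal.{0} → Set (Ordinal × Ordinal)) : Prop :=
  (∀ γ, p γ ≠ ∅ → StrongRegular γ ∧ μ ≤ γ ∧ γ < ν) ∧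
  (∀ γ, StrongRegular γ → μ ≤ γ → γ < ν → IsLevyCond μ γ (p γ)) ∧
  (∀ l : Cardinal.{0}, l.IsRegular → l ≤ ν →
    Cardinal.mk {γ : Cardinal.{0} // γ < l ∧ p γ ≠ ∅} < Cardinal.lift.{1} l)

open Cardinal Set

universe u

section GreedyUnion

variable {ι α : Type*} [LinearOrder ι] [WellFoundedLT ι]

def greedyUnion (F : ι → Set α) : ι → Set α :=
  wellFounded_lt.fix fun k IH => {x | ∃ j, ∃ hj : j < k, IH j hj ⊆ F j ∧ x ∈ F j}

variable {F G : ι → Set α} {j k : ι}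

theorem greedyUnion_eq (F : ι → Set α) (k : ι) :
    greedyUnion F k = {x | ∃ j < k, greedyUnion F j ⊆ F j ∧ x ∈ F j} := by
  rw [greedyUnion, WellFounded.fix_eq]
  simp only [exists_prop]

theorem greedyUnion_mono : Monotone (greedyUnion F) := by
  intro k k' hk x hx
  rw [greedyUnion_eq] at hx ⊢
  obtain ⟨j, hj, hacc, hx⟩ := hx
  exact ⟨j, hj.trans_le hk, hacc, hx⟩

theorem greedyUnion_congr (h : ∀ j < k, F j = G j) : greedyUnion F k = greedyUnion G k := by
  induction k using WellFoundedLT.induction with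
  | _ k IH =>
    rw [greedyUnion_eq, greedyUnion_eq]
    ext x
    refine exists_congr fun j => and_congr_right fun hj => ?_
    rw [h j hj, IH j hj fun i hi => h i (hi.trans hj)]

theorem subset_greedyUnion (hjk : j < k) (hj : greedyUnion F j ⊆ F j) :
    F j ⊆ greedyUnion F k := by
  intro x hx
  rw [greedyUnion_eq]
  exact ⟨j, hjk, hj, hx⟩

theorem exists_mem_of_mem_greedyUnion {x y : α} (hx : x ∈ greedyUnion F k)
    (hy : y ∈ greedyUnion F k) : ∃ j < k, x ∈ F j ∧ y ∈ F j := by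
  rw [greedyUnion_eq] at hx hy
  obtain ⟨j, hjk, hj, hx⟩ := hx
  obtain ⟨j', hj'k, hj', hy⟩ := hy
  rcases lt_trichotomy j j' with hlt | rfl | hlt
  · exact ⟨j', hj'k, hj' (subset_greedyUnion hlt hj hx), hy⟩
  · exact ⟨j, hjk, hx, hy⟩
  · exact ⟨j, hjk, hx, hj (subset_greedyUnion hlt hj' hy)⟩

end GreedyUnion

section Fragment

variable {ι β α : Type*}

def fragment (h : β → Set α) (p : Set (ι × β)) (j : ι) : Set α :=
  ⋃ (b) (_ : (j, b) ∈ p), h b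

variable {h : β → Set α} {p q : Set (ι × β)} {j : ι} {b : β}

theorem fragment_eq (hp : InjOn Prod.fst p) (hjb : (j, b) ∈ p) : fragment h p j = h b := by
  ext x
  simp only [fragment, mem_iUnion]
  refine ⟨fun ⟨b', hb', hx⟩ => ?_, fun hx => ⟨b, hjb, hx⟩⟩
  obtain rfl : b' = b := congrArg Prod.snd (hp hb' hjb rfl)
  exact hx

theorem fragment_eq_empty (hj : j ∉ Prod.fst '' p) : fragment h p j = ∅ := by
  simp only [fragment, iUnion_eq_empty]
  exact fun b hjb => absurd ⟨_, hjb, rfl⟩ hj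

theorem fragment_congr (hpq : p ⊆ q) (hq : InjOn Prod.fst q) (hj : j ∈ Prod.fst '' p) :
    fragment h p j = fragment h q j := by
  obtain ⟨⟨j, b⟩, hjb, rfl⟩ := hj
  rw [fragment_eq (hq.mono hpq) hjb, fragment_eq hq (hpq hjb)]

end Fragment

section FirstGap

variable {ι β : Type*} [ConditionallyCompleteLinearOrderBot ι] {p q : Set (ι × β)} {j : ι}

/-- Equal to `⊥` when `p` is defined everywhere; lemmas needing a genuine gap assume
`(Prod.fst '' p)ᶜ.Nonempty`. -/
def firstGap (p : Set (ι × β)) : ι :=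
  sInf (Prod.fst '' p)ᶜ

theorem mem_image_fst_of_lt_firstGap (hj : j < firstGap p) : j ∈ Prod.fst '' p :=
  not_not.mp (notMem_of_lt_csInf' hj)

theorem firstGap_mono (hpq : p ⊆ q) (hq : (Prod.fst '' q)ᶜ.Nonempty) :
    firstGap p ≤ firstGap q :=
  csInf_le_csInf (OrderBot.bddBelow _) hq (compl_subset_compl.mpr (image_mono hpq))

theorem firstGap_notMem [WellFoundedLT ι] (hp : (Prod.fst '' p)ᶜ.Nonempty) :
    firstGap p ∉ Prod.fst '' p :=
  csInf_mem hp

theorem lift_card_firstGap_le (p : Set (Ordinal.{u} × β)) :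
    Cardinal.lift.{u + 1} (firstGap p).card ≤ #(Prod.fst '' p) := by
  rw [← mk_Iio_ordinal]
  exact mk_le_mk_of_subset fun _ hj => mem_image_fst_of_lt_firstGap hj

end FirstGap

section GreedyRead

variable {ι β α : Type*} [ConditionallyCompleteLinearOrderBot ι] [WellFoundedLT ι]

def greedyRead (h : β → Set α) (p : Set (ι × β)) : Set α :=
  greedyUnion (fragment h p) (firstGap p)

variable {h : β → Set α} {p q : Set (ι × β)}

theorem greedyUnion_fragment_firstGap (hpq : p ⊆ q) (hq : InjOn Prod.fst q) :
    greedyUnion (fragment h q) (firstGap p) = greedyRead h p :=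
  greedyUnion_congr fun _ hj => (fragment_congr hpq hq (mem_image_fst_of_lt_firstGap hj)).symm

theorem greedyRead_empty : greedyRead h (∅ : Set (ι × β)) = ∅ := by
  refine eq_empty_of_forall_notMem fun x hx => ?_
  obtain ⟨j, -, hx, -⟩ := exists_mem_of_mem_greedyUnion hx hx
  rw [fragment_eq_empty (by simp)] at hx
  exact hx

theorem greedyRead_mono (hpq : p ⊆ q) (hq : InjOn Prod.fst q)
    (hgap : (Prod.fst '' q)ᶜ.Nonempty) : greedyRead h p ⊆ greedyRead h q := by
  rw [← greedyUnion_fragment_firstGap hpq hq]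
  exact greedyUnion_mono (firstGap_mono hpq hgap)

theorem subset_greedyRead_insert {v : β} (hq : InjOn Prod.fst (insert (firstGap p, v) p))
    (hgap : (Prod.fst '' insert (firstGap p, v) p)ᶜ.Nonempty) (hv : greedyRead h p ⊆ h v) :
    h v ⊆ greedyRead h (insert (firstGap p, v) p) := by
  set q := insert (firstGap p, v) p
  have hpq : p ⊆ q := subset_insert _ _
  have hgap_mem : firstGap p ∈ Prod.fst '' q := ⟨_, mem_insert _ _, rfl⟩
  have hlt : firstGap p < firstGap q := (firstGap_mono hpq hgap).lt_of_ne
    fun heq => firstGap_notMem hgap (heq ▸ hgap_mem)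
  have hfrag : fragment h q (firstGap p) = h v := fragment_eq hq (mem_insert _ _)
  rw [← hfrag]
  refine subset_greedyUnion hlt ?_
  rwa [greedyUnion_fragment_firstGap hpq hq, hfrag]

end GreedyRead

section LevyCollapse

variable {μ γ : Cardinal.{0}} {p : Set (Ordinal.{0} × Ordinal.{0})}

theorem injOn_fst_iff {α β : Type*} {p : Set (α × β)} :
    InjOn Prod.fst p ↔ ∀ a b b', (a, b) ∈ p → (a, b') ∈ p → b = b' := by
  refine ⟨fun hp a b b' hb hb' => congrArg Prod.snd (hp hb hb' rfl), ?_⟩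
  rintro hp ⟨a, b⟩ hb ⟨a', b'⟩ hb' (rfl : a = a')
  rw [hp a b b' hb hb']

theorem IsLevyCond.injOn (hp : IsLevyCond μ γ p) : InjOn Prod.fst p :=
  injOn_fst_iff.mpr hp.2.1

theorem isLevyCond_empty (hμ : μ ≠ 0) : IsLevyCond μ γ ∅ :=
  ⟨by simp, by simp, by simpa [pos_iff_ne_zero] using hμ⟩

theorem IsLevyCond.card_firstGap_lt (hp : IsLevyCond μ γ p) : (firstGap p).card < μ :=
  lift_lt.mp ((lift_card_firstGap_le p).trans_lt hp.2.2)

theorem IsLevyCond.nonempty_compl_image_fst (hp : IsLevyCond μ γ p) :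
    (Prod.fst '' p)ᶜ.Nonempty :=
  ⟨μ.ord, fun ⟨x, hx, hx1⟩ => (hx1 ▸ (hp.1 x hx).1).false⟩

theorem IsLevyCond.insert_firstGap (hp : IsLevyCond μ γ p) (hμ : ℵ₀ ≤ μ) {v : Ordinal}
    (hv : v < γ.ord) : IsLevyCond μ γ (insert (firstGap p, v) p) := by
  have hgap := firstGap_notMem hp.nonempty_compl_image_fst
  refine ⟨?_, injOn_fst_iff.mp ?_, ?_⟩
  · rintro x (rfl | hx)
    exacts [⟨lt_ord.mpr hp.card_firstGap_lt, hv⟩, hp.1 x hx]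
  · exact (injOn_insert fun h => hgap ⟨_, h, rfl⟩).mpr ⟨hp.injOn, hgap⟩
  · rw [image_insert_eq]
    exact mk_insert_le.trans_lt (add_lt_of_lt (aleph0_le_lift.mpr hμ) hp.2.2
      (one_lt_aleph0.trans_le (aleph0_le_lift.mpr hμ)))

theorem isLevyCond_of_forall_exists_mem {S : Set (Ordinal.{0} × Ordinal.{0})}
    {F : Ordinal.{0} → Set (Ordinal.{0} × Ordinal.{0})} {k : Ordinal.{0}} (hμ : μ.IsRegular)
    (hk : k.card < μ) (hF : ∀ j < k, IsLevyCond μ γ (F j))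
    (hS : ∀ x ∈ S, ∀ y ∈ S, ∃ j < k, x ∈ F j ∧ y ∈ F j) : IsLevyCond μ γ S := by
  refine ⟨fun x hx => ?_, fun a b b' hb hb' => ?_, ?_⟩
  · obtain ⟨j, hj, hx, -⟩ := hS x hx x hx
    exact (hF j hj).1 x hx
  · obtain ⟨j, hj, hb, hb'⟩ := hS _ hb _ hb'
    exact (hF j hj).2.1 a b b' hb hb'
  · have hsub : Prod.fst '' S ⊆ ⋃ j ∈ Iio k, Prod.fst '' F j := by
      rintro _ ⟨x, hx, rfl⟩
      obtain ⟨j, hj, hx, -⟩ := hS x hx x hx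
      exact mem_biUnion hj ⟨x, hx, rfl⟩
    refine (mk_le_mk_of_subset hsub).trans_lt ?_
    rw [card_biUnion_lt_iff_forall_of_isRegular hμ.lift
      (by rw [mk_Iio_ordinal]; exact lift_lt.mpr hk)]
    exact fun j hj => (hF j hj).2.2

theorem isLevyCond_fragment {h : Ordinal.{0} → Set (Ordinal.{0} × Ordinal.{0})} (hμ : μ ≠ 0)
    (hh : ∀ b, IsLevyCond μ γ (h b)) (hp : InjOn Prod.fst p) (j : Ordinal) :
    IsLevyCond μ γ (fragment h p j) := by
  by_cases hj : j ∈ Prod.fst '' p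
  · obtain ⟨⟨j, b⟩, hjb, rfl⟩ := hj
    rw [fragment_eq hp hjb]
    exact hh b
  · rw [fragment_eq_empty hj]
    exact isLevyCond_empty hμ

theorem isLevyCond_greedyRead {h : Ordinal.{0} → Set (Ordinal.{0} × Ordinal.{0})}
    (hμ : μ.IsRegular) (hh : ∀ b, IsLevyCond μ γ (h b)) (hp : InjOn Prod.fst p)
    (hgap : (firstGap p).card < μ) : IsLevyCond μ γ (greedyRead h p) :=
  isLevyCond_of_forall_exists_mem hμ hgap
    (fun j _ => isLevyCond_fragment hμ.ne_zero hh hp j)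
    (fun _ hx _ hy => exists_mem_of_mem_greedyUnion hx hy)

theorem mk_levyCond_le (hγ : StrongRegular γ) (hμγ : μ ≤ γ) :
    #{c // IsLevyCond μ γ c} ≤ lift.{1} γ := by
  have hγ₀ : ℵ₀ ≤ lift.{1} γ := aleph0_le_lift.mpr hγ.1.aleph0_le
  set T : Set (Ordinal.{0} × Ordinal.{0}) := Iio γ.ord ×ˢ Iio γ.ord
  have hT : #T ≤ lift.{1} γ := by
    rw [mk_congr (Equiv.Set.prod _ _), mk_prod, lift_id, mk_Iio_ordinal, card_ord,
      mul_eq_self hγ₀]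
  have hsub : {c | IsLevyCond μ γ c} ⊆
      ⋃ o ∈ Iio μ.ord, {t | t ⊆ T ∧ #t ≤ lift.{1} o.card} := by
    intro c hc
    obtain ⟨κ, hκ, hcκ⟩ := lt_lift_iff.mp
      ((mk_image_eq_of_injOn _ _ hc.injOn).symm.trans_lt hc.2.2)
    refine mem_biUnion (ord_lt_ord.mpr hκ) ⟨fun x hx => ?_, by rw [card_ord, hcκ]⟩
    exact ⟨(hc.1 x hx).1.trans_le (ord_le_ord.mpr hμγ), (hc.1 x hx).2⟩
  have hpiece : ∀ o ∈ Iio μ.ord, #{t | t ⊆ T ∧ #t ≤ lift.{1} o.card} ≤ lift.{1} γ := by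
    intro o ho
    have ho : o.card < γ := (lt_ord.mp ho).trans_le hμγ
    calc #{t | t ⊆ T ∧ #t ≤ lift.{1} o.card}
        ≤ max #T ℵ₀ ^ lift.{1} o.card := mk_bounded_subset_le T _
      _ ≤ lift.{1} γ ^ lift.{1} o.card := power_le_power_right (max_le hT hγ₀)
      _ = lift.{1} (γ ^ o.card) := (lift_power _ _).symm
      _ ≤ lift.{1} γ := lift_le.mpr ((le_powerlt γ ho).trans hγ.2.le)
  calc #{c // IsLevyCond μ γ c}
      ≤ #(Iio μ.ord) * ⨆ o : Iio μ.ord, #{t | t ⊆ T ∧ #t ≤ lift.{1} o.1.card} :=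
        (mk_le_mk_of_subset hsub).trans (mk_biUnion_le _ _)
    _ ≤ lift.{1} γ * lift.{1} γ := by
        gcongr
        · simpa using hμγ
        · exact ciSup_le' fun o => hpiece o o.2
    _ = lift.{1} γ := mul_eq_self hγ₀

end LevyCollapse

section LevyEnum

variable {μ γ : Cardinal.{0}} {c : Set (Ordinal.{0} × Ordinal.{0})}

theorem exists_levyEnum (hγ : StrongRegular γ) (hμ : μ ≠ 0) (hμγ : μ ≤ γ) :
    ∃ e : Ordinal.{0} → Set (Ordinal.{0} × Ordinal.{0}),
      (∀ v, IsLevyCond μ γ (e v)) ∧ ∀ c, IsLevyCond μ γ c → ∃ v < γ.ord, e v = c := by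
  have hle : #{c // IsLevyCond μ γ c} ≤ #(Iio γ.ord) := by
    rw [mk_Iio_ordinal, card_ord]
    exact mk_levyCond_le hγ hμγ
  obtain ⟨emb⟩ := hle
  have : Nonempty {c // IsLevyCond μ γ c} := ⟨⟨∅, isLevyCond_empty hμ⟩⟩
  refine ⟨fun v => if hv : v < γ.ord then (Function.invFun emb ⟨v, hv⟩).1 else ∅,
    fun v => ?_, fun c hc => ?_⟩
  · dsimp only
    split_ifs
    exacts [(Function.invFun emb _).2, isLevyCond_empty hμ]
  · obtain ⟨⟨v, hv⟩, hvc⟩ := Function.invFun_surjective emb.injective ⟨c, hc⟩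
    exact ⟨v, hv, by simp [mem_Iio.mp hv, hvc]⟩

/-- Junk unless `γ` is strong regular and `0 < μ ≤ γ`, see `exists_levyEnum`. -/
noncomputable def levyEnum (μ γ : Cardinal.{0}) : Ordinal.{0} → Set (Ordinal.{0} × Ordinal.{0}) :=
  Classical.epsilon fun e =>
    (∀ v, IsLevyCond μ γ (e v)) ∧ ∀ c, IsLevyCond μ γ c → ∃ v < γ.ord, e v = c

noncomputable def levyCode (μ γ : Cardinal.{0}) (c : Set (Ordinal.{0} × Ordinal.{0})) :
    Ordinal.{0} :=
  Classical.epsilon fun v => v < γ.ord ∧ levyEnum μ γ v = c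

theorem isLevyCond_levyEnum (hγ : StrongRegular γ) (hμ : μ ≠ 0) (hμγ : μ ≤ γ) (v : Ordinal) :
    IsLevyCond μ γ (levyEnum μ γ v) :=
  (Classical.epsilon_spec (exists_levyEnum hγ hμ hμγ)).1 v

theorem levyCode_spec (hγ : StrongRegular γ) (hμ : μ ≠ 0) (hμγ : μ ≤ γ)
    (hc : IsLevyCond μ γ c) : levyCode μ γ c < γ.ord ∧ levyEnum μ γ (levyCode μ γ c) = c :=
  Classical.epsilon_spec ((Classical.epsilon_spec (exists_levyEnum hγ hμ hμγ)).2 c hc)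

end LevyEnum

section EastonCollapse

variable {μ ν κ lam l γ : Cardinal.{0}} {p q : Cardinal.{0} → Set (Ordinal.{0} × Ordinal.{0})}

theorem IsEastonCond.isLevyCond (hp : IsEastonCond μ ν p) (hμ : μ ≠ 0) (γ : Cardinal) :
    IsLevyCond μ γ (p γ) := by
  by_cases hγ : p γ = ∅
  · rw [hγ]
    exact isLevyCond_empty hμ
  · obtain ⟨h1, h2, h3⟩ := hp.1 γ hγ
    exact hp.2.1 γ h1 h2 h3

theorem IsEastonCond.mk_support_lt (hp : IsEastonCond μ ν p) (hν : ν.IsRegular)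
    (hl : l.IsRegular) : #{γ // γ < l ∧ p γ ≠ ∅} < lift.{1} l := by
  rcases le_or_gt l ν with hlν | hνl
  · exact hp.2.2 l hl hlν
  · calc #{γ // γ < l ∧ p γ ≠ ∅}
        ≤ #{γ // γ < ν ∧ p γ ≠ ∅} := mk_subtype_mono fun γ hγ => ⟨(hp.1 γ hγ.2).2.2, hγ.2⟩
      _ < lift.{1} ν := hp.2.2 ν hν le_rfl
      _ < lift.{1} l := lift_lt.mpr hνl

open Classical in
noncomputable def eastonProj (κ ν : Cardinal.{0})
    (p : Cardinal.{0} → Set (Ordinal.{0} × Ordinal.{0})) (γ : Cardinal.{0}) :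
    Set (Ordinal.{0} × Ordinal.{0}) :=
  if γ ∈ Ico κ ν then greedyRead (levyEnum κ γ) (p γ) else ∅

theorem eastonProj_of_mem (hγ : γ ∈ Ico κ ν) :
    eastonProj κ ν p γ = greedyRead (levyEnum κ γ) (p γ) :=
  if_pos hγ

theorem eastonProj_empty : eastonProj κ ν (fun _ => ∅) = fun _ => ∅ := by
  funext γ
  unfold eastonProj
  split_ifs
  exacts [greedyRead_empty, rfl]

theorem eastonProj_ne_empty (h : eastonProj κ ν p γ ≠ ∅) : γ ∈ Ico κ ν ∧ p γ ≠ ∅ := by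
  unfold eastonProj at h
  split_ifs at h with hγ
  · exact ⟨hγ, fun hp => h (by rw [hp, greedyRead_empty])⟩
  · exact absurd rfl h

theorem IsEastonCond.eastonProj (hp : IsEastonCond μ lam p) (hμ : μ ≠ 0) (hκ : κ.IsRegular)
    (hμκ : μ ≤ κ) (hν : ν ≤ lam) : IsEastonCond κ ν (eastonProj κ ν p) := by
  refine ⟨fun γ hne => ?_, fun γ hγ hκγ hγν => ?_, fun l hl hlν => ?_⟩
  · obtain ⟨⟨hκγ, hγν⟩, hpγ⟩ := eastonProj_ne_empty hne
    exact ⟨(hp.1 γ hpγ).1, hκγ, hγν⟩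
  · have hpγ := hp.isLevyCond hμ γ
    rw [eastonProj_of_mem ⟨hκγ, hγν⟩]
    exact isLevyCond_greedyRead hκ (isLevyCond_levyEnum hγ hκ.ne_zero hκγ) hpγ.injOn
      (hpγ.card_firstGap_lt.trans_le hμκ)
  · refine (mk_subtype_mono fun γ hγ => ⟨hγ.1, ?_⟩).trans_lt (hp.2.2 l hl (hlν.trans hν))
    exact (eastonProj_ne_empty hγ.2).2

theorem eastonProj_mono (hq : IsEastonCond μ lam q) (hμ : μ ≠ 0) (hpq : ∀ γ, p γ ⊆ q γ)
    (γ : Cardinal) : eastonProj κ ν p γ ⊆ eastonProj κ ν q γ := by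
  unfold eastonProj
  split_ifs
  · exact greedyRead_mono (hpq γ) (hq.isLevyCond hμ γ).injOn
      (hq.isLevyCond hμ γ).nonempty_compl_image_fst
  · exact subset_rfl

end EastonCollapse

section Blocks

variable {ι α : Type*} [LinearOrder ι] [Preorder α] {ζ : ι} {μ ν : ι → α}

theorem monotoneOn_of_le_of_lt (hμν : ∀ i < ζ, μ i ≤ ν i)
    (hinc : ∀ i j, i < j → j < ζ → ν i < μ j) : MonotoneOn μ (Iio ζ) := by
  intro i _ j hj hij
  rcases hij.eq_or_lt with rfl | hij
  · exact le_rfl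
  · exact (hμν i (hij.trans hj)).trans (hinc i j hij hj).le

theorem eq_of_mem_Ico_of_mem_Ico (hinc : ∀ i j, i < j → j < ζ → ν i < μ j) {i j : ι} {a : α}
    (hi : i < ζ) (hj : j < ζ) (hai : a ∈ Ico (μ i) (ν i)) (haj : a ∈ Ico (μ j) (ν j)) :
    i = j := by
  rcases lt_trichotomy i j with hij | hij | hij
  · exact ((hai.2.trans (hinc i j hij hj)).trans_le haj.1).false.elim
  · exact hij
  · exact ((haj.2.trans (hinc j i hij hi)).trans_le hai.1).false.elim

end Blocks

section EastonLift

variable {ζ : Ordinal.{0}} {μ ν : Ordinal.{0} → Cardinal.{0}} {lam : Cardinal.{0}}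
  {p : Cardinal.{0} → Set (Ordinal.{0} × Ordinal.{0})}
  {q : Ordinal.{0} → Cardinal.{0} → Set (Ordinal.{0} × Ordinal.{0})} {γ : Cardinal.{0}}

open Classical in
/-- When the intervals `[μ i, ν i)` are disjoint, at most one `q i γ` is nonempty. -/
noncomputable def eastonLift (ζ : Ordinal.{0}) (μ : Ordinal.{0} → Cardinal.{0})
    (p : Cardinal.{0} → Set (Ordinal.{0} × Ordinal.{0}))
    (q : Ordinal.{0} → Cardinal.{0} → Set (Ordinal.{0} × Ordinal.{0})) (γ : Cardinal.{0}) :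
    Set (Ordinal.{0} × Ordinal.{0}) :=
  if h : ∃ i < ζ, q i γ ≠ ∅ then
    insert (firstGap (p γ), levyCode (μ h.choose) γ (q h.choose γ)) (p γ)
  else p γ

theorem eastonLift_of_exists (h : ∃ i < ζ, q i γ ≠ ∅) : ∃ i < ζ, q i γ ≠ ∅ ∧
    eastonLift ζ μ p q γ = insert (firstGap (p γ), levyCode (μ i) γ (q i γ)) (p γ) :=
  ⟨h.choose, h.choose_spec.1, h.choose_spec.2, dif_pos h⟩

theorem eastonLift_of_not_exists (h : ¬∃ i < ζ, q i γ ≠ ∅) : eastonLift ζ μ p q γ = p γ :=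
  dif_neg h

theorem subset_eastonLift (γ : Cardinal.{0}) : p γ ⊆ eastonLift ζ μ p q γ := by
  by_cases h : ∃ i < ζ, q i γ ≠ ∅
  · obtain ⟨i, -, -, heq⟩ := eastonLift_of_exists (p := p) (μ := μ) h
    exact heq ▸ subset_insert _ _
  · exact (eastonLift_of_not_exists h).symm.subset

theorem mk_support_eastonLift_lt (hp : IsEastonCond (μ 0) lam p)
    (hq : ∀ i < ζ, IsEastonCond (μ i) (ν i) (q i)) (hζ : ζ < (μ 0).ord)
    (hνreg : ∀ i < ζ, (ν i).IsRegular) (hμ0 : ∀ i < ζ, μ 0 ≤ μ i) {l : Cardinal.{0}}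
    (hl : l.IsRegular) (hll : l ≤ lam) :
    #{γ // γ < l ∧ eastonLift ζ μ p q γ ≠ ∅} < lift.{1} l := by
  have hsub : {γ | γ < l ∧ eastonLift ζ μ p q γ ≠ ∅} ⊆
      {γ | γ < l ∧ p γ ≠ ∅} ∪ ⋃ i ∈ Iio ζ, {γ | γ < l ∧ q i γ ≠ ∅} := by
    rintro γ ⟨hγl, hne⟩
    by_cases h : ∃ i < ζ, q i γ ≠ ∅
    · obtain ⟨i, hi, hqi⟩ := h
      exact Or.inr (mem_biUnion hi ⟨hγl, hqi⟩)
    · exact Or.inl ⟨hγl, by rwa [eastonLift_of_not_exists h] at hne⟩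
  have hql : #(⋃ i ∈ Iio ζ, {γ | γ < l ∧ q i γ ≠ ∅}) < lift.{1} l := by
    rcases le_or_gt l (μ 0) with hlμ | hμl
    · have hempty : (⋃ i ∈ Iio ζ, {γ | γ < l ∧ q i γ ≠ ∅}) = ∅ := by
        simp only [iUnion_eq_empty]
        refine fun i hi => eq_empty_of_forall_notMem ?_
        rintro γ ⟨hγl, hqi⟩
        exact (hγl.trans_le (hlμ.trans ((hμ0 i hi).trans ((hq i hi).1 γ hqi).2.1))).false
      rw [hempty, mk_eq_zero]
      exact aleph0_pos.trans_le (aleph0_le_lift.mpr hl.aleph0_le)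
    · rw [card_biUnion_lt_iff_forall_of_isRegular hl.lift
        (by rw [mk_Iio_ordinal]; exact lift_lt.mpr ((lt_ord.mp hζ).trans hμl))]
      exact fun i hi => (hq i hi).mk_support_lt (hνreg i hi) hl
  exact (mk_le_mk_of_subset hsub).trans_lt
    ((mk_union_le _ _).trans_lt (add_lt_of_lt (aleph0_le_lift.mpr hl.aleph0_le)
      (hp.2.2 l hl hll) hql))

theorem IsEastonCond.eastonLift (hp : IsEastonCond (μ 0) lam p)
    (hq : ∀ i < ζ, IsEastonCond (μ i) (ν i) (q i)) (hζ : ζ < (μ 0).ord)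
    (hμreg : ∀ i < ζ, (μ i).IsRegular) (hνreg : ∀ i < ζ, (ν i).IsRegular)
    (hμ0 : ∀ i < ζ, μ 0 ≤ μ i) (hlam : ∀ i < ζ, ν i ≤ lam) :
    IsEastonCond (μ 0) lam (eastonLift ζ μ p q) := by
  refine ⟨fun γ hne => ?_, fun γ hγ hμγ hγlam => ?_,
    fun l hl hll => mk_support_eastonLift_lt hp hq hζ hνreg hμ0 hl hll⟩
  · by_cases h : ∃ i < ζ, q i γ ≠ ∅
    · obtain ⟨i, hi, hqi⟩ := h
      obtain ⟨hγ, hμγ, hγν⟩ := (hq i hi).1 γ hqi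
      exact ⟨hγ, (hμ0 i hi).trans hμγ, hγν.trans_le (hlam i hi)⟩
    · exact hp.1 γ (by rwa [eastonLift_of_not_exists h] at hne)
  · by_cases h : ∃ i < ζ, q i γ ≠ ∅
    · obtain ⟨i, hi, hqi, heq⟩ := eastonLift_of_exists (p := p) (μ := μ) h
      obtain ⟨-, hμγi, hγνi⟩ := (hq i hi).1 γ hqi
      rw [heq]
      exact (hp.2.1 γ hγ hμγ hγlam).insert_firstGap
        (hμreg 0 ((zero_le (a := i)).trans_lt hi)).aleph0_le
        (levyCode_spec hγ (hμreg i hi).ne_zero hμγi ((hq i hi).2.1 γ hγ hμγi hγνi)).1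
    · rw [eastonLift_of_not_exists h]
      exact hp.2.1 γ hγ hμγ hγlam

theorem subset_eastonProj_eastonLift (hq : ∀ i < ζ, IsEastonCond (μ i) (ν i) (q i))
    (hμreg : ∀ i < ζ, (μ i).IsRegular) (hinc : ∀ i j, i < j → j < ζ → ν i < μ j)
    (hlift : IsEastonCond (μ 0) lam (eastonLift ζ μ p q)) (hμ : μ 0 ≠ 0)
    (hpq : ∀ i < ζ, ∀ γ, eastonProj (μ i) (ν i) p γ ⊆ q i γ) {i : Ordinal.{0}} (hi : i < ζ)
    (γ : Cardinal.{0}) : q i γ ⊆ eastonProj (μ i) (ν i) (eastonLift ζ μ p q) γ := by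
  rcases eq_or_ne (q i γ) ∅ with hqi | hqi
  · exact hqi ▸ empty_subset _
  obtain ⟨hγ, hμγ, hγν⟩ := (hq i hi).1 γ hqi
  obtain ⟨j, hj, hqj, heq⟩ := eastonLift_of_exists (p := p) (μ := μ) ⟨i, hi, hqi⟩
  obtain rfl : j = i := eq_of_mem_Ico_of_mem_Ico hinc hj hi ((hq j hj).1 γ hqj).2 ⟨hμγ, hγν⟩
  have hcode := levyCode_spec hγ (hμreg j hj).ne_zero hμγ ((hq j hj).2.1 γ hγ hμγ hγν)
  have hL := hlift.isLevyCond hμ γ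
  rw [heq] at hL
  rw [eastonProj_of_mem ⟨hμγ, hγν⟩, heq]
  conv_lhs => rw [← hcode.2]
  refine subset_greedyRead_insert hL.injOn hL.nonempty_compl_image_fst ?_
  rw [hcode.2, ← eastonProj_of_mem ⟨hμγ, hγν⟩]
  exact hpq j hj γ

end EastonLift

/-- Lemma 2.4 of the paper: for increasing sequences `⟨μ i⟩`, `⟨ν i⟩` of regular
cardinals with `ζ < μ 0`, `μ i ≤ ν i < μ j` for `i < j < ζ`, and `λ ≥ sup ν i`, there is
a projection from `E(μ 0, λ)` to the full-support product `∏_{i<ζ} E(μ i, ν i)`. -/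
theorem exists_projection_easton (ζ : Ordinal.{0}) (μ ν : Ordinal.{0} → Cardinal.{0})
    (lam : Cardinal.{0})
    (hζ : ζ < (μ 0).ord)
    (hμreg : ∀ i < ζ, (μ i).IsRegular) (hνreg : ∀ i < ζ, (ν i).IsRegular)
    (hμν : ∀ i < ζ, μ i ≤ ν i)
    (hinc : ∀ i j, i < j → j < ζ → ν i < μ j)
    (hlam : ∀ i < ζ, ν i ≤ lam) :
    ∃ π : (Cardinal.{0} → Set (Ordinal × Ordinal)) →
          (Ordinal.{0} → Cardinal.{0} → Set (Ordinal × Ordinal)),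
      (∀ p, IsEastonCond (μ 0) lam p → ∀ i < ζ, IsEastonCond (μ i) (ν i) (π p i)) ∧
      (π (fun _ => ∅) = fun _ _ => ∅) ∧
      (∀ p q, IsEastonCond (μ 0) lam p → IsEastonCond (μ 0) lam q →
        (∀ γ, p γ ⊆ q γ) → ∀ i < ζ, ∀ γ, π p i γ ⊆ π q i γ) ∧
      (∀ p (q : Ordinal.{0} → Cardinal.{0} → Set (Ordinal × Ordinal)),
        IsEastonCond (μ 0) lam p →
        (∀ i < ζ, IsEastonCond (μ i) (ν i) (q i)) →
        (∀ i < ζ, ∀ γ, π p i γ ⊆ q i γ) →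
        ∃ p', IsEastonCond (μ 0) lam p' ∧ (∀ γ, p γ ⊆ p' γ) ∧
          ∀ i < ζ, ∀ γ, q i γ ⊆ π p' i γ) := by
  have hμ : μ 0 ≠ 0 := by
    rintro h
    simp [h] at hζ
  have hμ0 : ∀ i < ζ, μ 0 ≤ μ i := fun i hi =>
    monotoneOn_of_le_of_lt hμν hinc ((zero_le (a := i)).trans_lt hi) hi (zero_le (a := i))
  refine ⟨fun p i => eastonProj (μ i) (ν i) p,
    fun p hp i hi => hp.eastonProj hμ (hμreg i hi) (hμ0 i hi) (hlam i hi),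
    funext fun _ => eastonProj_empty,
    fun p q _ hq hpq _ _ => eastonProj_mono hq hμ hpq,
    fun p q hp hq hpq => ?_⟩
  have hlift := hp.eastonLift hq hζ hμreg hνreg hμ0 hlam
  exact ⟨eastonLift ζ μ p q, hlift, subset_eastonLift,
    fun i hi => subset_eastonProj_eastonLift hq hμreg hinc hlift hμ hpq hi⟩
end

section
/- Let μ < ν be cardinals with μ regular and ν Mahlo. Then the Easton collapse E(μ, ν) is ν-Knaster: for every subset A ⊆ E(μ, ν) with |A| = ν there exists B ⊆ A with |B| = ν such that any two elements of B are compatible (have a common lower bound in E(μ, ν)). -/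
/-- A cardinal `ν` is Mahlo if it is strongly inaccessible and the set of strongly
inaccessible cardinals below `ν` is stationary in `ν`. -/
def IsMahlo (ν : Cardinal.{0}) : Prop :=
  ν.IsInaccessible ∧
    IsStationaryIn
      {α : Ordinal | α < ν.ord ∧ ∃ c : Cardinal.{0}, c.ord = α ∧ c.IsInaccessible}
      ν.ord

/-!
Enumerate the conditions as `p α`, `α < ν`. At an inaccessible `α < ν` the Easton support
condition at `α` bounds the coordinates of `p α` that lie below `α` by some ordinal `< α`. This
bound is thus regressive on the stationary set of inaccessibles, and a Fodor-type argument makes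
it at most some `β₀` on an unbounded set of indices. As `ν` is a strong limit, there are fewer
than `ν` possible traces of a condition on coordinates and values below `β = max β₀ μ`, so
unboundedly many `p α` have the same trace. Thinning out further so that the whole support of
each chosen `p α` lies below every later chosen index, two chosen conditions can only share
coordinates below `β`, where they agree; hence their coordinatewise union is a common extension.
-/

open Cardinal Set

universe u

def IsUnboundedIn (S : Set Ordinal.{u}) (δ : Ordinal.{u}) : Prop :=
  (∀ α ∈ S, α < δ) ∧ ∀ θ < δ, ∃ α ∈ S, θ ≤ α

theorem isUnboundedIn_of_le_mk {ν : Cardinal.{u}} {S : Set Ordinal.{u}}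
    (hS : ∀ α ∈ S, α < ν.ord) (hmk : Cardinal.lift.{u + 1} ν ≤ #S) : IsUnboundedIn S ν.ord := by
  refine ⟨hS, fun θ hθ => ?_⟩
  by_contra! hbdd
  have : #S ≤ lift.{u + 1} θ.card :=
    (mk_le_mk_of_subset hbdd).trans_eq (Cardinal.mk_Iio_ordinal θ)
  exact (lift_lt.2 (lt_ord.1 hθ)).not_ge (hmk.trans this)

namespace Cardinal.IsRegular

variable {ν : Cardinal.{u}}

theorem exists_forall_lt_of_mk_lt (hν : ν.IsRegular) {s : Set Ordinal.{u}}
    (hs : ∀ i ∈ s, i < ν.ord) (hmk : #s < Cardinal.lift.{u + 1} ν) :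
    ∃ δ < ν.ord, ∀ i ∈ s, i < δ := by
  refine ⟨sSup ((· + 1) '' s), Ordinal.sSup_add_one_lt_of_lt_cof ?_ hs, fun i hi => ?_⟩
  · rwa [← Ordinal.lift_cof, hν.cof_ord]
  · refine (lt_add_one i).trans_le (le_csSup ⟨ν.ord, ?_⟩ (mem_image_of_mem _ hi))
    rintro _ ⟨j, hj, rfl⟩
    exact Order.add_one_le_of_lt (hs j hj)

theorem mk_eq_of_isUnboundedIn (hν : ν.IsRegular) {S : Set Ordinal.{u}}
    (hS : IsUnboundedIn S ν.ord) : #S = Cardinal.lift.{u + 1} ν := by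
  refine le_antisymm ?_ (not_lt.1 fun hlt => ?_)
  · calc #S ≤ #(Iio ν.ord) := mk_le_mk_of_subset hS.1
      _ = Cardinal.lift.{u + 1} ν := by rw [Cardinal.mk_Iio_ordinal, card_ord]
  · obtain ⟨δ, hδν, hδ⟩ := hν.exists_forall_lt_of_mk_lt hS.1 hlt
    obtain ⟨α, hαS, hδα⟩ := hS.2 δ hδν
    exact (hδ α hαS).not_ge hδα

theorem exists_isUnboundedIn_fiber (hν : ν.IsRegular) {S : Set Ordinal.{u}}
    (hS : IsUnboundedIn S ν.ord) {X : Type (u + 1)} (c : Ordinal.{u} → X)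
    (hX : #X < Cardinal.lift.{u + 1} ν) : ∃ x, IsUnboundedIn {α ∈ S | c α = x} ν.ord := by
  obtain ⟨x, t, htS, hνt, hct⟩ :=
    infinite_pigeonhole_set (fun α : S => c α) (Cardinal.lift.{u + 1} ν)
      (hν.mk_eq_of_isUnboundedIn hS).ge (by simpa using hν.aleph0_le) (by rwa [hν.lift.cof_ord])
  refine ⟨x, isUnboundedIn_of_le_mk (fun α hα => hS.1 α hα.1) (hνt.trans ?_)⟩
  exact mk_le_mk_of_subset fun α hα => ⟨htS hα, hct hα⟩

theorem exists_forall_lt_map_lt (hν : ν.IsRegular) (hν₀ : ℵ₀ < ν)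
    {h : Ordinal.{u} → Ordinal.{u}} (hh : ∀ β < ν.ord, h β < ν.ord) {θ₀ : Ordinal.{u}}
    (hθ₀ : θ₀ < ν.ord) : ∃ θ, θ₀ ≤ θ ∧ θ < ν.ord ∧ ∀ β < θ, h β < θ := by
  -- `θ` is the limit of the iterates of `s ↦ sup_{β < s} (h β + 1)` starting from `θ₀`
  set F : Ordinal.{u} → Ordinal.{u} := fun s => ⨆ β : Iio s, h β + 1
  have hF : ∀ s < ν.ord, F s < ν.ord := fun s hs =>
    Ordinal.lift_iSup_add_one_lt_of_lt_cof
      (by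
        rw [Cardinal.mk_Iio_ordinal, ← Ordinal.lift_cof, hν.cof_ord, lift_lift, lift_lt]
        exact lt_ord.1 hs)
      fun β => hh β (β.2.trans hs)
  refine ⟨Ordinal.nfp F θ₀, Ordinal.le_nfp F θ₀, nfp_lt_ord_of_isRegular hν hν₀.ne' hF hθ₀,
    fun β hβ => ?_⟩
  obtain ⟨n, hn⟩ := Ordinal.lt_nfp_iff.1 hβ
  calc h β < h β + 1 := lt_add_one _
    _ ≤ F (F^[n] θ₀) := Ordinal.le_iSup (fun β : Iio (F^[n] θ₀) => h β + 1) ⟨β, hn⟩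
    _ = F^[n + 1] θ₀ := (Function.iterate_succ_apply' F n θ₀).symm
    _ ≤ Ordinal.nfp F θ₀ := Ordinal.iterate_le_nfp F θ₀ (n + 1)

theorem isClubIn_setOf_forall_lt_map_lt (hν : ν.IsRegular) (hν₀ : ℵ₀ < ν)
    {h : Ordinal.{u} → Ordinal.{u}} (hh : ∀ β < ν.ord, h β < ν.ord) :
    IsClubIn {θ | θ < ν.ord ∧ ∀ β < θ, h β < θ} ν.ord := by
  refine ⟨fun θ hθ => hθ.1, fun θ₀ hθ₀ => ?_, fun x hxC hx hxν => ⟨hxν, fun β hβ => ?_⟩⟩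
  · obtain ⟨θ, hθ₀θ, hθν, hθ⟩ := hν.exists_forall_lt_map_lt hν₀ hh hθ₀
    exact ⟨θ, ⟨hθν, hθ⟩, hθ₀θ⟩
  · have hbdd : BddAbove x := ⟨ν.ord, fun θ hθ => (hxC hθ).1.le⟩
    obtain ⟨θ, hθx, hβθ⟩ := (lt_csSup_iff hbdd hx).1 hβ
    exact ((hxC hθx).2 β hβθ).trans_le (le_csSup hbdd hθx)

theorem exists_isUnboundedIn_setOf_le_of_isStationaryIn (hν : ν.IsRegular) (hν₀ : ℵ₀ < ν)
    {T : Set Ordinal.{u}} (hT : IsStationaryIn T ν.ord) {f : Ordinal.{u} → Ordinal.{u}}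
    (hf : ∀ α ∈ T, f α < α) : ∃ β < ν.ord, IsUnboundedIn {α ∈ T | f α ≤ β} ν.ord := by
  by_contra! hbdd
  have : ∀ β < ν.ord, ∃ θ < ν.ord, ∀ α ∈ T, f α ≤ β → α < θ := by
    intro β hβ
    by_contra! hunb
    refine hbdd β hβ ⟨fun α hα => hT.1 α hα.1, fun θ hθ => ?_⟩
    obtain ⟨α, hαT, hfα, hθα⟩ := hunb θ hθ
    exact ⟨α, ⟨hαT, hfα⟩, hθα⟩
  choose! h hhν hh using this
  obtain ⟨α, hαT, -, hαh⟩ := hT.2 _ (hν.isClubIn_setOf_forall_lt_map_lt hν₀ hhν)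
  exact (hαh (f α) (hf α hαT)).not_gt (hh (f α) ((hf α hαT).trans (hT.1 α hαT)) α hαT le_rfl)

theorem exists_isUnboundedIn_subset_forall_map_lt (hν : ν.IsRegular) (hν₀ : ℵ₀ < ν)
    {S : Set Ordinal.{u}} (hS : IsUnboundedIn S ν.ord) {g : Ordinal.{u} → Ordinal.{u}}
    (hg : ∀ α < ν.ord, g α < ν.ord) :
    ∃ V ⊆ S, IsUnboundedIn V ν.ord ∧ ∀ α ∈ V, ∀ α' ∈ V, α < α' → g α < α' := by
  refine ⟨{α ∈ S | ∀ α' ∈ S, α' < α → g α' < α}, fun α hα => hα.1,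
    ⟨fun α hα => hS.1 α hα.1, fun θ₀ hθ₀ => ?_⟩, fun α hα α' hα' hlt => hα'.2 α hα.1 hlt⟩
  obtain ⟨θ, hθ₀θ, hθν, hθ⟩ := hν.exists_forall_lt_map_lt hν₀ hg hθ₀
  set W := {α ∈ S | θ ≤ α}
  obtain ⟨hmemS, hθle⟩ : sInf W ∈ W := csInf_mem (hS.2 θ hθν)
  refine ⟨sInf W, ⟨hmemS, fun α' hα'S hα'lt => ?_⟩, hθ₀θ.trans hθle⟩
  have hα'θ : α' < θ := not_le.1 fun hle => (csInf_le' (s := W) ⟨hα'S, hle⟩).not_gt hα'lt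
  exact (hθ α' hα'θ).trans_le hθle

end Cardinal.IsRegular

theorem Cardinal.IsStrongLimit.mk_set_lt_lift {ν : Cardinal.{u}} (hν : ν.IsStrongLimit)
    {X : Type (u + 1)} (hX : #X < Cardinal.lift.{u + 1} ν) :
    #(Set X) < Cardinal.lift.{u + 1} ν := by
  obtain ⟨κ, hκν, hκX⟩ := lt_lift_iff.1 hX
  rw [mk_set, ← hκX, ← lift_two_power, Cardinal.lift_lt]
  exact hν.isStrongPrelimit hκν

section SupportBound

variable {X : Type*} {p : Cardinal.{u} → Set X}

noncomputable def supportBound (p : Cardinal.{u} → Set X) (o : Ordinal.{u}) : Ordinal.{u} :=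
  sInf {δ | ∀ γ : Cardinal.{u}, γ.ord < o → p γ ≠ ∅ → γ.ord < δ}

theorem ord_lt_supportBound {o : Ordinal.{u}} {γ : Cardinal.{u}} (hγ : γ.ord < o)
    (hpγ : p γ ≠ ∅) : γ.ord < supportBound p o :=
  csInf_mem (s := {δ | ∀ γ : Cardinal.{u}, γ.ord < o → p γ ≠ ∅ → γ.ord < δ})
    ⟨o, fun _ h _ => h⟩ γ hγ hpγ

theorem supportBound_lt_ord {l : Cardinal.{u}} (hl : l.IsRegular)
    (hp : #{γ // γ < l ∧ p γ ≠ ∅} < Cardinal.lift.{u + 1} l) : supportBound p l.ord < l.ord := by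
  obtain ⟨δ, hδl, hδ⟩ := hl.exists_forall_lt_of_mk_lt (s := ord '' {γ | γ < l ∧ p γ ≠ ∅})
    (by rintro _ ⟨γ, hγ, rfl⟩; exact ord_lt_ord.2 hγ.1) (mk_image_le.trans_lt hp)
  have hδ' : δ ∈ {δ | ∀ γ : Cardinal.{u}, γ.ord < l.ord → p γ ≠ ∅ → γ.ord < δ} :=
    fun γ hγ hpγ => hδ _ ⟨γ, ⟨ord_lt_ord.1 hγ, hpγ⟩, rfl⟩
  exact (csInf_le' hδ').trans_lt hδl

end SupportBound

abbrev TraceIndex (β : Ordinal.{u}) : Type (u + 1) :=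
  {γ : Cardinal.{u} // γ.ord < β} × Iio β × Iio β

def lowerTrace (β : Ordinal.{u}) (p : Cardinal.{u} → Set (Ordinal.{u} × Ordinal.{u})) :
    Set (TraceIndex β) :=
  {t | (t.2.1.1, t.2.2.1) ∈ p t.1.1}

theorem mk_traceIndex_lt {ν : Cardinal.{u}} (hν : ℵ₀ ≤ ν) {β : Ordinal.{u}} (hβ : β < ν.ord) :
    #(TraceIndex β) < Cardinal.lift.{u + 1} ν := by
  have hβν : #(Iio β) < Cardinal.lift.{u + 1} ν := by
    rw [Cardinal.mk_Iio_ordinal, Cardinal.lift_lt]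
    exact lt_ord.1 hβ
  have hγν : #{γ : Cardinal.{u} // γ.ord < β} < Cardinal.lift.{u + 1} ν :=
    (mk_le_of_injective (f := fun γ => (⟨γ.1.ord, γ.2⟩ : Iio β))
      fun γ γ' h => Subtype.ext (ord_injective (congrArg Subtype.val h))).trans_lt hβν
  have hℵ : ℵ₀ ≤ Cardinal.lift.{u + 1} ν := by simpa using hν
  simp only [mk_prod, Cardinal.lift_id]
  exact mul_lt_of_lt hℵ hγν (mul_lt_of_lt hℵ hβν hβν)

namespace IsEastonCond

variable {μ ν : Cardinal.{0}} {p q : Cardinal.{0} → Set (Ordinal.{0} × Ordinal.{0})}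

theorem subset_of_lowerTrace_eq (hp : IsEastonCond μ ν p) {β : Ordinal.{0}} (hμβ : μ.ord ≤ β)
    (h : lowerTrace β p = lowerTrace β q) {γ : Cardinal.{0}} (hγ : γ.ord < β) : p γ ⊆ q γ := by
  rintro ⟨a, b⟩ hab
  obtain ⟨hγSR, hμγ, hγν⟩ := hp.1 γ (nonempty_of_mem hab).ne_empty
  obtain ⟨ha, hb⟩ := (hp.2.1 γ hγSR hμγ hγν).1 _ hab
  have : (⟨⟨γ, hγ⟩, ⟨a, ha.trans_le hμβ⟩, ⟨b, hb.trans hγ⟩⟩ : TraceIndex β) ∈ lowerTrace β q :=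
    h ▸ hab
  exact this

theorem eq_of_lowerTrace_eq (hp : IsEastonCond μ ν p) (hq : IsEastonCond μ ν q)
    {β : Ordinal.{0}} (hμβ : μ.ord ≤ β) (h : lowerTrace β p = lowerTrace β q) {γ : Cardinal.{0}}
    (hγ : γ.ord < β) : p γ = q γ :=
  (hp.subset_of_lowerTrace_eq hμβ h hγ).antisymm (hq.subset_of_lowerTrace_eq hμβ h.symm hγ)

theorem union (hp : IsEastonCond μ ν p) (hq : IsEastonCond μ ν q)
    (hagree : ∀ γ, p γ ≠ ∅ → q γ ≠ ∅ → p γ = q γ) : IsEastonCond μ ν fun γ => p γ ∪ q γ := by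
  have hcases : ∀ γ, p γ ∪ q γ = p γ ∨ p γ ∪ q γ = q γ := by
    intro γ
    by_cases hqγ : q γ = ∅
    · exact .inl (by rw [hqγ, union_empty])
    by_cases hpγ : p γ = ∅
    · exact .inr (by rw [hpγ, empty_union])
    · exact .inl (by rw [hagree γ hpγ hqγ, union_self])
  refine ⟨fun γ hγ => ?_, fun γ hγSR hμγ hγν => ?_, fun l hl hlν => ?_⟩
  · rcases hcases γ with h | h <;> simp only [h] at hγ
    exacts [hp.1 γ hγ, hq.1 γ hγ]
  · rcases hcases γ with h | h <;> simp only [h]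
    exacts [hp.2.1 γ hγSR hμγ hγν, hq.2.1 γ hγSR hμγ hγν]
  · have hsupp : ∀ γ, γ < l ∧ p γ ∪ q γ ≠ ∅ →
        γ ∈ {γ | γ < l ∧ p γ ≠ ∅} ∪ {γ | γ < l ∧ q γ ≠ ∅} := by
      rintro γ ⟨hγl, hγ⟩
      by_cases hpγ : p γ = ∅
      · exact .inr ⟨hγl, by rwa [hpγ, empty_union] at hγ⟩
      · exact .inl ⟨hγl, hpγ⟩
    exact (mk_subtype_mono hsupp).trans_lt ((mk_union_le _ _).trans_lt
      (add_lt_of_lt (by simpa using hl.aleph0_le) (hp.2.2 l hl hlν) (hq.2.2 l hl hlν)))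

end IsEastonCond

theorem exists_isUnboundedIn_pairwise_agree {μ ν : Cardinal.{0}} (hμν : μ < ν) (hν : IsMahlo ν)
    {p : Ordinal.{0} → Cardinal.{0} → Set (Ordinal.{0} × Ordinal.{0})}
    (hp : ∀ α < ν.ord, IsEastonCond μ ν (p α)) :
    ∃ V, IsUnboundedIn V ν.ord ∧
      ∀ α ∈ V, ∀ α' ∈ V, ∀ γ, p α γ ≠ ∅ → p α' γ ≠ ∅ → p α γ = p α' γ := by
  have hreg := hν.1.isRegular
  have hf : ∀ α ∈ {α : Ordinal | α < ν.ord ∧ ∃ c : Cardinal.{0}, c.ord = α ∧ c.IsInaccessible},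
      supportBound (p α) α < α := by
    rintro _ ⟨hαν, c, rfl, hc⟩
    exact supportBound_lt_ord hc.isRegular ((hp _ hαν).2.2 c hc.isRegular (ord_lt_ord.1 hαν).le)
  obtain ⟨β₀, hβ₀, hU⟩ :=
    hreg.exists_isUnboundedIn_setOf_le_of_isStationaryIn hν.1.aleph0_lt hν.2 hf
  set β := max β₀ μ.ord
  have hβ : β < ν.ord := max_lt hβ₀ (ord_lt_ord.2 hμν)
  obtain ⟨y, hU'⟩ := hreg.exists_isUnboundedIn_fiber hU (fun α => lowerTrace β (p α))
    (hν.1.isStrongLimit.mk_set_lt_lift (mk_traceIndex_lt hreg.aleph0_le hβ))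
  obtain ⟨V, hVU', hV, hsep⟩ := hreg.exists_isUnboundedIn_subset_forall_map_lt hν.1.aleph0_lt hU'
    (g := fun α => supportBound (p α) ν.ord)
    fun α hα => supportBound_lt_ord hreg ((hp α hα).2.2 ν hreg le_rfl)
  have hagree : ∀ α ∈ V, ∀ α' ∈ V, α < α' → ∀ γ, p α γ ≠ ∅ → p α' γ ≠ ∅ → p α γ = p α' γ := by
    intro α hα α' hα' hlt γ hpγ hp'γ
    obtain ⟨⟨-, -⟩, hαy⟩ := hVU' hα
    obtain ⟨⟨-, hα'β₀⟩, hα'y⟩ := hVU' hα'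
    have hpα := hp α (hV.1 α hα)
    -- a coordinate in the support of `p α` lies below `α'`, hence below `β` by the choice of `β₀`
    have hγα' : γ.ord < α' := (ord_lt_supportBound (ord_lt_ord.2 (hpα.1 γ hpγ).2.2) hpγ).trans
      (hsep α hα α' hα' hlt)
    have hγβ : γ.ord < β := (ord_lt_supportBound hγα' hp'γ).trans_le (hα'β₀.trans (le_max_left _ _))
    exact hpα.eq_of_lowerTrace_eq (hp α' (hV.1 α' hα')) (le_max_right _ _) (hαy.trans hα'y.symm) hγβ
  refine ⟨V, hV, fun α hα α' hα' γ hpγ hp'γ => ?_⟩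
  rcases lt_trichotomy α α' with hlt | rfl | hlt
  · exact hagree α hα α' hα' hlt γ hpγ hp'γ
  · rfl
  · exact (hagree α' hα' α hα hlt γ hp'γ hpγ).symm

theorem easton_knaster_general (μ ν : Cardinal.{0})
    (hν : IsMahlo ν) (hμν : μ < ν) :
    ∀ A : Set (Cardinal.{0} → Set (Ordinal × Ordinal)),
      (∀ p ∈ A, IsEastonCond μ ν p) → Cardinal.mk ↥A = Cardinal.lift.{1} ν →
      ∃ B ⊆ A, Cardinal.mk ↥B = Cardinal.lift.{1} ν ∧
        ∀ p ∈ B, ∀ q ∈ B, ∃ r, IsEastonCond μ ν r ∧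
          (∀ γ, p γ ⊆ r γ) ∧ (∀ γ, q γ ⊆ r γ) := by
  intro A hA hAcard
  obtain ⟨e⟩ : Nonempty (Iio ν.ord ≃ A) :=
    Cardinal.eq.1 (by rw [Cardinal.mk_Iio_ordinal, card_ord, hAcard])
  set p : Ordinal → Cardinal → Set (Ordinal × Ordinal) :=
    fun α => if h : α < ν.ord then e ⟨α, h⟩ else fun _ => ∅
  have hpA : ∀ α (h : α < ν.ord), p α = e ⟨α, h⟩ := fun α h => dif_pos h
  obtain ⟨V, hV, hagree⟩ :=
    exists_isUnboundedIn_pairwise_agree hμν hν fun α h => hpA α h ▸ hA _ (e _).2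
  have hpV : ∀ α ∈ V, p α ∈ A := fun α hα => hpA α (hV.1 α hα) ▸ (e _).2
  have hinj : InjOn p V := fun α hα α' hα' h => by
    rw [hpA α (hV.1 α hα), hpA α' (hV.1 α' hα')] at h
    exact congrArg Subtype.val (e.injective (Subtype.ext h))
  refine ⟨p '' V, image_subset_iff.2 hpV, ?_, ?_⟩
  · rw [mk_image_eq_of_injOn p V hinj, hν.1.isRegular.mk_eq_of_isUnboundedIn hV]
  · rintro _ ⟨α, hα, rfl⟩ _ ⟨α', hα', rfl⟩
    exact ⟨_, (hA _ (hpV α hα)).union (hA _ (hpV α' hα')) (hagree α hα α' hα'),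
      fun _ => subset_union_left, fun _ => subset_union_right⟩

/-- Part of Lemma 2.5 (Shioya): for `μ` regular and `ν` Mahlo, the Easton collapse
`E(μ, ν)` is `ν`-Knaster: every set of `ν` many conditions has a subset of size `ν`
whose elements are pairwise compatible. -/
theorem easton_knaster (μ ν : Cardinal.{0})
    (hμ : μ.IsRegular) (hν : IsMahlo ν) (hμν : μ < ν) :
    ∀ A : Set (Cardinal.{0} → Set (Ordinal × Ordinal)),
      (∀ p ∈ A, IsEastonCond μ ν p) → Cardinal.mk ↥A = Cardinal.lift.{1} ν →
      ∃ B ⊆ A, Cardinal.mk ↥B = Cardinal.lift.{1} ν ∧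
        ∀ p ∈ B, ∀ q ∈ B, ∃ r, IsEastonCond μ ν r ∧
          (∀ γ, p γ ⊆ r γ) ∧ (∀ γ, q γ ⊆ r γ) :=
  easton_knaster_general μ ν hν hμν
end
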